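/- arXiv:1301.2835 — 2 statements merged into one kernel-verified Lean document; each statement's English description precedes it below -/
import Mathlib

section
/- Let R = ⊕_{i∈ℤ} R_i be a ℤ-graded (associative, not necessarily unital) ring and let N be the nil radical of R. If N contains no nonzero homogeneous elements, then N = 0. -/
/-- An iterated-product power for non-unital rings: `ppow a n = a ^ (n + 1)`. -/
def ppow {R : Type*} [NonUnitalRing R] (a : R) : ℕ → R
  | 0 => a
  | n + 1 => ppow a n * a

/-- An element of a (possibly non-unital) ring is nilpotent if some positive power vanishes. -/
def IsNilElem {R : Type*} [NonUnitalRing R] (a : R) : Prop :=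
  ∃ n : ℕ, ppow a n = 0

/-- A two-sided ideal is nil if all of its elements are nilpotent. -/
def TwoSidedIdeal.IsNil {R : Type*} [NonUnitalRing R] (I : TwoSidedIdeal R) : Prop :=
  ∀ x ∈ I, IsNilElem x

/-- The nil radical of a (possibly non-unital) ring: the sum of all its nil two-sided ideals. -/
noncomputable def nilRad (R : Type*) [NonUnitalRing R] : TwoSidedIdeal R :=
  sSup {I : TwoSidedIdeal R | I.IsNil}

/-!
Let `a` be a nonzero element of a nil ideal `J` whose homogeneous support is as small as
possible, `d` its top degree and `b = a_d`. For homogeneous `r, s`, the element `r a s` has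
support in a translate of that of `a`, and `r b s` is its component in the translate of `d`.
Hence `r b s = 0` forces `r a s = 0` by minimality, and comparing top-degree components shows
that sums of the pairs `(r b s, r a s)` vanish in the first coordinate exactly when they vanish
in the second. So every `t` in the ideal generated by `b` has a partner `A ∈ J` with `t v = 0`
whenever `A v = 0`, and with `t A = A t`; since `A` is nilpotent, so is `t`. Thus `b` is a
nonzero homogeneous element of the nil radical.
-/

open DirectSum Finset

section Nilpotent

variable {R : Type*} [NonUnitalRing R]

theorem ppow_succ' (c : R) (n : ℕ) : ppow c (n + 1) = c * ppow c n := by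
  induction n with
  | zero => rfl
  | succ n ih =>
    show ppow c (n + 1) * c = c * (ppow c n * c)
    rw [ih, mul_assoc]

theorem Commute.ppow_left {a b : R} (h : Commute a b) (n : ℕ) : Commute (ppow a n) b := by
  induction n with
  | zero => exact h
  | succ n ih => exact ih.mul_left h

theorem isNilElem_of_commute {t A : R} (hcomm : Commute t A) (hA : IsNilElem A)
    (hann : ∀ v, A * v = 0 → t * v = 0) : IsNilElem t := by
  obtain ⟨N, hN⟩ := hA
  have key : ∀ i j, i + j = N → ppow t i * ppow A j = 0 := by
    intro i
    induction i with
    | zero =>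
      intro j hj
      rw [show j = N by omega, hN, mul_zero]
    | succ i ih =>
      intro j hj
      have hA : A * (ppow t i * ppow A j) = 0 := by
        rw [← mul_assoc, ← (hcomm.ppow_left i).eq, mul_assoc, ← ppow_succ', ih (j + 1) (by omega)]
      rw [ppow_succ', mul_assoc, hann _ hA]
  refine ⟨N + 1, ?_⟩
  rw [ppow_succ']
  exact hann _ ((hcomm.ppow_left N).eq ▸ key N 0 (by omega))

end Nilpotent

section GradedComponents

variable {ι R : Type*} [DecidableEq ι] [NonUnitalRing R] (ℳ : ι → AddSubgroup R)
  [Decomposition ℳ]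

noncomputable def gradedProj (i : ι) : R →+ R :=
  (ℳ i).subtype.comp ((DFinsupp.evalAddMonoidHom i).comp (decomposeAddEquiv ℳ).toAddMonoidHom)

theorem gradedProj_apply (i : ι) (y : R) : gradedProj ℳ i y = decompose ℳ y i := rfl

theorem gradedProj_mem (i : ι) (y : R) : gradedProj ℳ i y ∈ ℳ i := SetLike.coe_mem _

theorem gradedProj_of_mem_same {i : ι} {y : R} (hy : y ∈ ℳ i) : gradedProj ℳ i y = y :=
  decompose_of_mem_same ℳ hy

theorem gradedProj_of_mem_ne {i j : ι} {y : R} (hy : y ∈ ℳ i) (hij : i ≠ j) :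
    gradedProj ℳ j y = 0 :=
  decompose_of_mem_ne ℳ hy hij

open Classical in
noncomputable def gradedSupport (y : R) : Finset ι := (decompose ℳ y).support

theorem mem_gradedSupport_iff {i : ι} {y : R} :
    i ∈ gradedSupport ℳ y ↔ gradedProj ℳ i y ≠ 0 := by
  classical
  rw [gradedSupport, DFinsupp.mem_support_iff, gradedProj_apply, ne_eq, ne_eq,
    ZeroMemClass.coe_eq_zero]

theorem sum_gradedProj (y : R) : ∑ i ∈ gradedSupport ℳ y, gradedProj ℳ i y = y := by
  classical
  exact sum_support_decompose ℳ y

theorem gradedSupport_nonempty {y : R} (hy : y ≠ 0) : (gradedSupport ℳ y).Nonempty := by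
  rw [Finset.nonempty_iff_ne_empty]
  intro h
  rw [← sum_gradedProj ℳ y, h, Finset.sum_empty] at hy
  exact hy rfl

theorem diag_eq_sum_gradedProj (v : R) :
    ((v, v) : R × R) = ∑ i ∈ gradedSupport ℳ v, (gradedProj ℳ i v, gradedProj ℳ i v) := by
  ext <;> simp [Prod.fst_sum, Prod.snd_sum, sum_gradedProj]

variable [AddCommGroup ι] [SetLike.GradedMul ℳ]

theorem gradedProj_mul_of_mem_left {i : ι} {v : R} (hv : v ∈ ℳ i) (j : ι) (y : R) :
    gradedProj ℳ j (v * y) = v * gradedProj ℳ (j - i) y := by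
  have hmem (k : ι) : v * gradedProj ℳ k y ∈ ℳ (i + k) :=
    SetLike.mul_mem_graded hv (gradedProj_mem ℳ k y)
  conv_lhs => rw [← sum_gradedProj ℳ y, Finset.mul_sum, map_sum]
  refine (Finset.sum_eq_single (j - i) (fun k _ hk => ?_) fun hk => ?_).trans ?_
  · exact gradedProj_of_mem_ne ℳ (hmem k) (by rintro rfl; simp at hk)
  · rw [mem_gradedSupport_iff, not_not] at hk
    rw [hk, mul_zero, map_zero]
  · exact gradedProj_of_mem_same ℳ (by simpa using hmem (j - i))

theorem gradedProj_mul_of_mem_right {i : ι} {v : R} (hv : v ∈ ℳ i) (j : ι) (y : R) :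
    gradedProj ℳ j (y * v) = gradedProj ℳ (j - i) y * v := by
  have hmem (k : ι) : gradedProj ℳ k y * v ∈ ℳ (k + i) :=
    SetLike.mul_mem_graded (gradedProj_mem ℳ k y) hv
  conv_lhs => rw [← sum_gradedProj ℳ y, Finset.sum_mul, map_sum]
  refine (Finset.sum_eq_single (j - i) (fun k _ hk => ?_) fun hk => ?_).trans ?_
  · exact gradedProj_of_mem_ne ℳ (hmem k) (by rintro rfl; simp at hk)
  · rw [mem_gradedSupport_iff, not_not] at hk
    rw [hk, zero_mul, map_zero]
  · exact gradedProj_of_mem_same ℳ (by simpa using hmem (j - i))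

end GradedComponents

section LeadingPairs

variable {ι R : Type*} [AddCommGroup ι] [LinearOrder ι] [NonUnitalRing R]
  (ℳ : ι → AddSubgroup R) [Decomposition ℳ] (J : TwoSidedIdeal R) (x : R) (d : ι)

/-- Pairs `(A_e, A)` with `A ∈ J` supported in the translate of the support of `x` that moves
`d` to `e`. For `x = a` and `d` its top degree these include `(r a_d s, r a s)` for homogeneous
`r, s`, and `leadingSpan` collects their sums. -/
def leadingPairs (e : ι) : AddSubgroup (R × R) where
  carrier := {p | p.2 ∈ J ∧ gradedProj ℳ e p.2 = p.1 ∧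
    ∀ f ∉ (gradedSupport ℳ x).image (· + (e - d)), gradedProj ℳ f p.2 = 0}
  zero_mem' := ⟨J.zero_mem, map_zero _, fun _ _ => map_zero _⟩
  add_mem' := by
    rintro p q ⟨hpJ, hpe, hp⟩ ⟨hqJ, hqe, hq⟩
    exact ⟨J.add_mem hpJ hqJ, by simp [hpe, hqe], fun f hf => by simp [hp f hf, hq f hf]⟩
  neg_mem' := by
    rintro p ⟨hpJ, hpe, hp⟩
    exact ⟨J.neg_mem hpJ, by simp [hpe], fun f hf => by simp [hp f hf]⟩

def leadingSpan : AddSubgroup (R × R) :=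
  { ⨆ e, (leadingPairs ℳ J x d e).toAddSubmonoid with
    neg_mem' := fun {p} hp => by
      refine AddSubmonoid.iSup_induction _
        (motive := fun p => -p ∈ ⨆ e, (leadingPairs ℳ J x d e).toAddSubmonoid) hp
        (fun e q hq => ?_) (by simp) fun p q hp hq => ?_
      · exact AddSubmonoid.mem_iSup_of_mem e ((leadingPairs ℳ J x d e).neg_mem hq)
      · rw [neg_add]
        exact add_mem hp hq }

variable {ℳ J x d}

theorem mem_leadingSpan_of_mem {e : ι} {p : R × R} (hp : p ∈ leadingPairs ℳ J x d e) :
    p ∈ leadingSpan ℳ J x d :=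
  AddSubmonoid.mem_iSup_of_mem (S := fun e => (leadingPairs ℳ J x d e).toAddSubmonoid) e hp

theorem mem_leadingPairs_self (hx : x ∈ J) :
    (gradedProj ℳ d x, x) ∈ leadingPairs ℳ J x d d := by
  refine ⟨hx, rfl, fun f hf => ?_⟩
  by_contra h
  exact hf (mem_image.2 ⟨f, (mem_gradedSupport_iff ℳ).2 h, by simp⟩)

theorem snd_mem_of_mem_leadingSpan {p : R × R} (hp : p ∈ leadingSpan ℳ J x d) : p.2 ∈ J :=
  AddSubmonoid.iSup_induction _ (motive := fun p => p.2 ∈ J) hp (fun _ _ hq => hq.1) J.zero_mem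
    fun _ _ => J.add_mem

section GradedMul

variable [SetLike.GradedMul ℳ]

theorem diag_mul_mem_leadingPairs {i e : ι} {v : R} (hv : v ∈ ℳ i) {p : R × R}
    (hp : p ∈ leadingPairs ℳ J x d e) : (v, v) * p ∈ leadingPairs ℳ J x d (i + e) := by
  obtain ⟨hpJ, hpe, hp⟩ := hp
  refine ⟨J.mul_mem_left _ _ hpJ, ?_, fun f hf => ?_⟩
  · simp [gradedProj_mul_of_mem_left ℳ hv, hpe]
  · rw [Prod.snd_mul, gradedProj_mul_of_mem_left ℳ hv, hp, mul_zero]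
    rintro h
    obtain ⟨l, hl, hlf⟩ := mem_image.1 h
    refine hf (mem_image.2 ⟨l, hl, ?_⟩)
    calc l + (i + e - d) = i + (l + (e - d)) := by abel
      _ = f := by rw [hlf, add_sub_cancel]

theorem mul_diag_mem_leadingPairs {i e : ι} {v : R} (hv : v ∈ ℳ i) {p : R × R}
    (hp : p ∈ leadingPairs ℳ J x d e) : p * (v, v) ∈ leadingPairs ℳ J x d (e + i) := by
  obtain ⟨hpJ, hpe, hp⟩ := hp
  refine ⟨J.mul_mem_right _ _ hpJ, ?_, fun f hf => ?_⟩
  · simp [gradedProj_mul_of_mem_right ℳ hv, hpe]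
  · rw [Prod.snd_mul, gradedProj_mul_of_mem_right ℳ hv, hp, zero_mul]
    rintro h
    obtain ⟨l, hl, hlf⟩ := mem_image.1 h
    refine hf (mem_image.2 ⟨l, hl, ?_⟩)
    calc l + (e + i - d) = l + (e - d) + i := by abel
      _ = f := by rw [hlf, sub_add_cancel]

theorem diag_mul_mem_leadingSpan (v : R) {p : R × R} (hp : p ∈ leadingSpan ℳ J x d) :
    (v, v) * p ∈ leadingSpan ℳ J x d := by
  refine AddSubmonoid.iSup_induction _ (motive := fun p => (v, v) * p ∈ leadingSpan ℳ J x d) hp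
    (fun e q hq => ?_) (by simp) fun p q hp hq => by simpa [mul_add] using add_mem hp hq
  rw [diag_eq_sum_gradedProj ℳ v, sum_mul]
  exact sum_mem fun i _ =>
    mem_leadingSpan_of_mem (diag_mul_mem_leadingPairs (gradedProj_mem ℳ i v) hq)

theorem mul_diag_mem_leadingSpan (v : R) {p : R × R} (hp : p ∈ leadingSpan ℳ J x d) :
    p * (v, v) ∈ leadingSpan ℳ J x d := by
  refine AddSubmonoid.iSup_induction _ (motive := fun p => p * (v, v) ∈ leadingSpan ℳ J x d) hp
    (fun e q hq => ?_) (by simp) fun p q hp hq => by simpa [add_mul] using add_mem hp hq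
  rw [diag_eq_sum_gradedProj ℳ v, mul_sum]
  exact sum_mem fun i _ =>
    mem_leadingSpan_of_mem (mul_diag_mem_leadingPairs (gradedProj_mem ℳ i v) hq)

end GradedMul

theorem eq_zero_of_mem_leadingPairs (hd : d ∈ gradedSupport ℳ x)
    (hmin : ∀ z ∈ J, z ≠ 0 → #(gradedSupport ℳ x) ≤ #(gradedSupport ℳ z)) {e : ι} {p : R × R}
    (hp : p ∈ leadingPairs ℳ J x d e) (h1 : p.1 = 0) : p.2 = 0 := by
  obtain ⟨hpJ, hpe, hp⟩ := hp
  by_contra h2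
  have hsub : gradedSupport ℳ p.2 ⊆ ((gradedSupport ℳ x).image (· + (e - d))).erase e := by
    intro f hf
    rw [mem_gradedSupport_iff] at hf
    refine mem_erase.2 ⟨?_, by_contra fun h => hf (hp f h)⟩
    rintro rfl
    exact hf (hpe.trans h1)
  have he : e ∈ (gradedSupport ℳ x).image (· + (e - d)) :=
    mem_image.2 ⟨d, hd, add_sub_cancel d e⟩
  have := (hmin _ hpJ h2).trans (card_le_card hsub)
  rw [card_erase_of_mem he] at this
  have := card_image_le (s := gradedSupport ℳ x) (f := (· + (e - d)))
  have := card_pos.2 ⟨d, hd⟩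
  omega

variable [IsOrderedAddMonoid ι]

theorem gradedProj_snd_eq_zero_of_mem_leadingPairs (hdmax : ∀ l ∈ gradedSupport ℳ x, l ≤ d)
    {e f : ι} {p : R × R} (hp : p ∈ leadingPairs ℳ J x d e) (hef : e < f) :
    gradedProj ℳ f p.2 = 0 := by
  refine hp.2.2 f fun h => ?_
  obtain ⟨l, hl, rfl⟩ := mem_image.1 h
  have : l + (e - d) ≤ e := by simpa using add_le_add_left (hdmax l hl) (e - d)
  exact hef.not_ge this

theorem fst_eq_zero_iff_of_mem_leadingSpan (hd : d ∈ gradedSupport ℳ x)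
    (hdmax : ∀ l ∈ gradedSupport ℳ x, l ≤ d)
    (hmin : ∀ z ∈ J, z ≠ 0 → #(gradedSupport ℳ x) ≤ #(gradedSupport ℳ z)) {p : R × R}
    (hp : p ∈ leadingSpan ℳ J x d) : p.1 = 0 ↔ p.2 = 0 := by
  classical
  obtain ⟨q, rfl⟩ := (AddSubmonoid.mem_iSup_iff_exists_dfinsupp' _ p).1 hp
  rcases eq_or_ne q 0 with rfl | hq0
  · simp [DFinsupp.sum_zero_index]
  have hne : q.support.Nonempty := by
    rwa [Finset.nonempty_iff_ne_empty, Ne, DFinsupp.support_eq_empty]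
  have hmem (f : ι) : (q f : R × R) ∈ leadingPairs ℳ J x d f := (q f).2
  -- the summand of top degree `e` is seen, in degree `e`, by both coordinates of the sum
  set e := q.support.max' hne
  have he : e ∈ q.support := q.support.max'_mem hne
  have hqe : (q e : R × R) ≠ 0 := by
    simpa [ZeroMemClass.coe_eq_zero] using DFinsupp.mem_support_iff.1 he
  have ht : (q e : R × R).1 ≠ 0 := fun h1 =>
    hqe (Prod.ext h1 (eq_zero_of_mem_leadingPairs hd hmin (hmem e) h1))
  have hfst : gradedProj ℳ e (q.sum fun _ y => (y : R × R)).1 = (q e : R × R).1 := by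
    rw [DFinsupp.sum, Prod.fst_sum, map_sum]
    refine (sum_eq_single e (fun f _ hfe => ?_) fun h => absurd he h).trans ?_
    · rw [← (hmem f).2.1]
      exact gradedProj_of_mem_ne ℳ (gradedProj_mem ℳ f _) hfe
    · rw [← (hmem e).2.1]
      exact gradedProj_of_mem_same ℳ (gradedProj_mem ℳ e _)
  have hsnd : gradedProj ℳ e (q.sum fun _ y => (y : R × R)).2 = (q e : R × R).1 := by
    rw [DFinsupp.sum, Prod.snd_sum, map_sum]
    refine (sum_eq_single e (fun f hf hfe => ?_) fun h => absurd he h).trans (hmem e).2.1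
    exact gradedProj_snd_eq_zero_of_mem_leadingPairs hdmax (hmem f)
      (lt_of_le_of_ne (q.support.le_max' f hf) hfe)
  refine iff_of_false (fun h => ht ?_) fun h => ht ?_
  · rw [← hfst, h, map_zero]
  · rw [← hsnd, h, map_zero]

end LeadingPairs

section LeadingIdeal

variable {ι R : Type*} [AddCommGroup ι] [LinearOrder ι] [NonUnitalRing R]
  (ℳ : ι → AddSubgroup R) [Decomposition ℳ] [SetLike.GradedMul ℳ]
  (J : TwoSidedIdeal R) (x : R) (d : ι)

def leadingIdeal : TwoSidedIdeal R :=
  .mk' {t | ∃ A, (t, A) ∈ leadingSpan ℳ J x d} ⟨0, zero_mem _⟩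
    (fun ⟨A, hA⟩ ⟨B, hB⟩ => ⟨A + B, add_mem hA hB⟩) (fun ⟨A, hA⟩ => ⟨-A, neg_mem hA⟩)
    (fun {u _} ⟨A, hA⟩ => ⟨u * A, diag_mul_mem_leadingSpan u hA⟩)
    (fun {_ v} ⟨A, hA⟩ => ⟨A * v, mul_diag_mem_leadingSpan v hA⟩)

variable {ℳ J x d}

theorem mem_leadingIdeal {t : R} :
    t ∈ leadingIdeal ℳ J x d ↔ ∃ A, (t, A) ∈ leadingSpan ℳ J x d :=
  TwoSidedIdeal.mem_mk' _ _ _ _ _ _ t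

theorem gradedProj_mem_leadingIdeal (hx : x ∈ J) : gradedProj ℳ d x ∈ leadingIdeal ℳ J x d :=
  mem_leadingIdeal.2 ⟨x, mem_leadingSpan_of_mem (mem_leadingPairs_self hx)⟩

theorem leadingIdeal_isNil [IsOrderedAddMonoid ι] (hJ : J.IsNil)
    (hd : d ∈ gradedSupport ℳ x) (hdmax : ∀ l ∈ gradedSupport ℳ x, l ≤ d)
    (hmin : ∀ z ∈ J, z ≠ 0 → #(gradedSupport ℳ x) ≤ #(gradedSupport ℳ z)) :
    (leadingIdeal ℳ J x d).IsNil := by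
  intro t ht
  obtain ⟨A, hA⟩ := mem_leadingIdeal.1 ht
  have key {p : R × R} (hp : p ∈ leadingSpan ℳ J x d) : p.1 = 0 ↔ p.2 = 0 :=
    fst_eq_zero_iff_of_mem_leadingSpan hd hdmax hmin hp
  refine isNilElem_of_commute ?_ (hJ A (snd_mem_of_mem_leadingSpan hA)) fun v hv => ?_
  · have := sub_mem (diag_mul_mem_leadingSpan t hA) (mul_diag_mem_leadingSpan t hA)
    exact sub_eq_zero.1 ((key this).1 (sub_self _))
  · exact (key (mul_diag_mem_leadingSpan v hA)).2 hv

end LeadingIdeal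

theorem TwoSidedIdeal.IsNil.le_nilRad {R : Type*} [NonUnitalRing R] {I : TwoSidedIdeal R}
    (hI : I.IsNil) : I ≤ nilRad R :=
  le_sSup hI

theorem exists_homogeneous_ne_zero_mem_nilRad {ι R : Type*} [AddCommGroup ι] [LinearOrder ι]
    [IsOrderedAddMonoid ι] [NonUnitalRing R] (ℳ : ι → AddSubgroup R) [Decomposition ℳ]
    [SetLike.GradedMul ℳ] {J : TwoSidedIdeal R} (hJ : J.IsNil) {y : R} (hy : y ∈ J)
    (hy0 : y ≠ 0) : ∃ b ∈ nilRad R, b ≠ 0 ∧ ∃ i, b ∈ ℳ i := by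
  obtain ⟨a, ⟨haJ, ha0⟩, hmin⟩ := (measure fun z => #(gradedSupport ℳ z)).wf.has_min
    {z | z ∈ J ∧ z ≠ 0} ⟨y, hy, hy0⟩
  have hne := gradedSupport_nonempty ℳ ha0
  have hnil := leadingIdeal_isNil hJ (max'_mem _ hne) (fun l hl => le_max' _ l hl)
    fun z hz hz0 => not_lt.1 (hmin z ⟨hz, hz0⟩)
  exact ⟨gradedProj ℳ _ a, TwoSidedIdeal.le_iff.1 hnil.le_nilRad (gradedProj_mem_leadingIdeal haJ),
    (mem_gradedSupport_iff ℳ).1 (max'_mem _ hne), _, gradedProj_mem ℳ _ a⟩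

/-- Let `R = ⊕_{i ∈ ℤ} Rᵢ` be a `ℤ`-graded (associative, not necessarily unital) ring and let
`N` be its nil radical.  If `N` contains no nonzero homogeneous elements, then `N = 0`. -/
theorem nilRad_eq_bot_of_no_homogeneous {R : Type*} [NonUnitalRing R]
    (ℳ : ℤ → AddSubgroup R) [SetLike.GradedMul ℳ] [DirectSum.Decomposition ℳ]
    (h : ∀ x ∈ nilRad R, (∃ i : ℤ, x ∈ ℳ i) → x = 0) :
    nilRad R = ⊥ := by
  refine eq_bot_iff.2 (sSup_le fun J hJ => TwoSidedIdeal.le_iff.2 fun y hy => ?_)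
  rw [SetLike.mem_coe, TwoSidedIdeal.mem_bot]
  by_contra hy0
  obtain ⟨b, hb, hb0, hbhom⟩ := exists_homogeneous_ne_zero_mem_nilRad ℳ hJ hy hy0
  exact hb0 (h b hb hbhom)
end

section
/- Let R be a (not necessarily unital) ring, let a ∈ R, and let S be the subring of R generated by the single element a. Then S is a Jacobson radical ring if and only if a is nilpotent. -/
/-- An element `a` of a (possibly non-unital) ring is quasi-regular if it has a quasi-inverse
`b`, i.e. `a + b + a * b = a + b + b * a = 0`. -/
def IsQuasiRegular {R : Type*} [NonUnitalRing R] (a : R) : Prop :=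
  ∃ b : R, a + b + a * b = 0 ∧ a + b + b * a = 0

/-- A (possibly non-unital) ring is a Jacobson radical ring if all its elements are
quasi-regular. -/
def IsJacobsonRadicalRing (R : Type*) [NonUnitalRing R] : Prop :=
  ∀ a : R, IsQuasiRegular a

/-!
Adjoining a unit, `x` is quasi-regular exactly when `1 + x` is a unit of `Unitization ℤ S`. When `S`
is generated by `a`, this ring is commutative and is a quotient of `ℤ[X]` via `X ↦ a`, so it is a
Jacobson ring. All of `S` being quasi-regular says that `1 + a u` is a unit for every `u`, i.e. that
`a` lies in the Jacobson radical, which in a Jacobson ring is the nilradical. Conversely, every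
element of `S` has the form `u a`, so it is nilpotent when `a` is, and `1 + x` is then a unit.
-/

open Polynomial

theorem Int.jacobson_bot : (⊥ : Ideal ℤ).jacobson = ⊥ := by
  refine le_bot_iff.mp fun x hx => ?_
  rw [Ideal.mem_jacobson_bot] at hx
  have h₁ := Int.isUnit_iff.mp (hx 1)
  have h₂ := Int.isUnit_iff.mp (hx (-1))
  rw [Ideal.mem_bot]
  omega

instance Int.isJacobsonRing : IsJacobsonRing ℤ := by
  refine isJacobsonRing_iff_prime_eq.mpr fun P hP => ?_
  rcases eq_or_ne P ⊥ with rfl | hP₀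
  · exact Int.jacobson_bot
  · have := hP.isMaximal hP₀
    exact Ideal.jacobson_eq_self_of_isMaximal

theorem NonUnitalSubring.closure_closure_coe_preimage {R : Type*} [NonUnitalRing R] {s : Set R} :
    closure (((↑) : closure s → R) ⁻¹' s) = ⊤ :=
  eq_top_iff.2 fun x _ ↦ Subtype.recOn x fun _ hx' ↦
    closure_induction (fun _ h ↦ subset_closure h) (zero_mem _) (fun _ _ _ _ ↦ add_mem)
      (fun _ _ ↦ neg_mem) (fun _ _ _ _ ↦ mul_mem) hx'

theorem isQuasiRegular_iff_isQuasiregular {R : Type*} [NonUnitalRing R] {x : R} :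
    IsQuasiRegular x ↔ IsQuasiregular x := by
  rw [isQuasiregular_iff]
  exact exists_congr fun y => by rw [add_comm y x]

theorem Unitization.exists_inr_mul_eq_inr {S A : Type*} [CommSemiring S] [NonUnitalSemiring A]
    [Module S A] (a : A) (u : Unitization S A) : ∃ s : A, (a : Unitization S A) * u = s :=
  ⟨(a * u : Unitization S A).snd, Unitization.ext (by simp) rfl⟩

section Unitization

variable {S R : Type*} [CommSemiring S] [NonUnitalRing R] [Module S R] [IsScalarTower S R R]
  [SMulCommClass S R R]

theorem Unitization.inr_ppow (a : R) (n : ℕ) :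
    ((ppow a n : R) : Unitization S R) = (a : Unitization S R) ^ (n + 1) := by
  induction n with
  | zero => simp [ppow]
  | succ n ih => rw [ppow, inr_mul, ih, ← pow_succ]

theorem Unitization.isNilpotent_inr_iff [Nontrivial S] {a : R} :
    IsNilpotent (a : Unitization S R) ↔ IsNilElem a := by
  refine ⟨fun ⟨n, hn⟩ => ?_, fun ⟨n, hn⟩ => ⟨n + 1, by rw [← inr_ppow (S := S), hn, inr_zero]⟩⟩
  cases n with
  | zero => exact absurd hn one_ne_zero
  | succ n => exact ⟨n, inr_injective (R := S) (by rw [inr_ppow, hn, inr_zero])⟩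

theorem Unitization.isUnit_one_add_inr_iff {x : R} :
    IsUnit (1 + (x : Unitization S R)) ↔ IsQuasiRegular x := by
  rw [isQuasiRegular_iff_isQuasiregular, isQuasiregular_iff_isUnit' S]

end Unitization

section NonUnitalRing

variable {R : Type*} [NonUnitalRing R]

theorem NonUnitalSubring.coe_ppow {S : NonUnitalSubring R} (x : S) (n : ℕ) :
    ((ppow x n : S) : R) = ppow (x : R) n := by
  induction n with
  | zero => rfl
  | succ n ih => exact congrArg (· * (x : R)) ih

theorem NonUnitalSubring.isNilElem_coe {S : NonUnitalSubring R} {x : S} :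
    IsNilElem (x : R) ↔ IsNilElem x := by
  simp only [IsNilElem, ← coe_ppow, ZeroMemClass.coe_eq_zero]

theorem Unitization.exists_aeval_eq_inr {a x : R} (hx : x ∈ NonUnitalSubring.closure {a}) :
    ∃ p : ℤ[X], aeval (a : Unitization ℤ R) p = x := by
  induction hx using NonUnitalSubring.closure_induction with
  | mem y hy => exact ⟨X, by rw [Set.mem_singleton_iff.mp hy, aeval_X]⟩
  | zero => exact ⟨0, by rw [map_zero, inr_zero]⟩
  | add y z _ _ hy hz =>
    obtain ⟨p, hp⟩ := hy
    obtain ⟨q, hq⟩ := hz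
    exact ⟨p + q, by rw [map_add, hp, hq, inr_add]⟩
  | neg y _ hy =>
    obtain ⟨p, hp⟩ := hy
    exact ⟨-p, by rw [map_neg, hp, inr_neg]⟩
  | mul y z _ _ hy hz =>
    obtain ⟨p, hp⟩ := hy
    obtain ⟨q, hq⟩ := hz
    exact ⟨p * q, by rw [map_mul, hp, hq, inr_mul]⟩

theorem Unitization.exists_mul_inr_eq_inr {a x : R} (hx : x ∈ NonUnitalSubring.closure {a}) :
    ∃ u : Unitization ℤ R, u * a = x := by
  induction hx using NonUnitalSubring.closure_induction with
  | mem y hy => exact ⟨1, by rw [Set.mem_singleton_iff.mp hy, one_mul]⟩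
  | zero => exact ⟨0, by rw [zero_mul, inr_zero]⟩
  | add y z _ _ hy hz =>
    obtain ⟨u, hu⟩ := hy
    obtain ⟨v, hv⟩ := hz
    exact ⟨u + v, by rw [add_mul, hu, hv, inr_add]⟩
  | neg y _ hy =>
    obtain ⟨u, hu⟩ := hy
    exact ⟨-u, by rw [neg_mul, hu, inr_neg]⟩
  | mul y z _ _ _ hz =>
    obtain ⟨v, hv⟩ := hz
    exact ⟨y * v, by rw [mul_assoc (y : Unitization ℤ R), hv, inr_mul]⟩

theorem Unitization.aeval_inr_surjective {a : R} (h : NonUnitalSubring.closure {a} = ⊤) :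
    Function.Surjective (aeval (R := ℤ) (a : Unitization ℤ R)) := by
  intro u
  rw [← inl_fst_add_inr_snd_eq u]
  obtain ⟨p, hp⟩ := exists_aeval_eq_inr (h ▸ NonUnitalSubring.mem_top u.snd)
  exact ⟨C u.fst + p, by rw [map_add, aeval_C, hp, algebraMap_eq_inl]⟩

end NonUnitalRing

section NonUnitalCommRing

variable {R : Type*} [NonUnitalCommRing R] {a : R}

theorem Unitization.isJacobsonRing_of_closure_eq_top (h : NonUnitalSubring.closure {a} = ⊤) :
    IsJacobsonRing (Unitization ℤ R) :=
  isJacobsonRing_of_surjective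
    ⟨(aeval (R := ℤ) (a : Unitization ℤ R)).toRingHom, aeval_inr_surjective h⟩

theorem isJacobsonRadicalRing_iff_isNilElem_of_closure_eq_top
    (h : NonUnitalSubring.closure {a} = ⊤) : IsJacobsonRadicalRing R ↔ IsNilElem a := by
  have := Unitization.isJacobsonRing_of_closure_eq_top h
  rw [← Unitization.isNilpotent_inr_iff (S := ℤ)]
  constructor
  · intro hR
    have hjac : (a : Unitization ℤ R) ∈ (⊥ : Ideal (Unitization ℤ R)).jacobson :=
      (Ideal.mem_jacobson_bot (R := Unitization ℤ R)).mpr fun u => by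
        obtain ⟨s, hs⟩ := Unitization.exists_inr_mul_eq_inr a u
        rw [hs, add_comm]
        exact Unitization.isUnit_one_add_inr_iff.mpr (hR s)
    rwa [← Ideal.radical_eq_jacobson (R := Unitization ℤ R)] at hjac
  · intro ha x
    obtain ⟨u, hu⟩ := Unitization.exists_mul_inr_eq_inr (h ▸ NonUnitalSubring.mem_top x)
    rw [← Unitization.isUnit_one_add_inr_iff (S := ℤ), ← hu]
    exact ((Commute.all u _).isNilpotent_mul_left ha).isUnit_one_add

end NonUnitalCommRing

/-- The subring generated by a single element `a` of a (possibly non-unital) ring is a Jacobson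
radical ring if and only if `a` is nilpotent. -/
theorem isJacobsonRadicalRing_closure_singleton_iff_isNilElem {R : Type*} [NonUnitalRing R]
    (a : R) :
    IsJacobsonRadicalRing (NonUnitalSubring.closure ({a} : Set R)) ↔ IsNilElem a := by
  have hgen : NonUnitalSubring.closure {(⟨a, NonUnitalSubring.subset_closure rfl⟩ :
      NonUnitalSubring.closure ({a} : Set R))} = ⊤ := by
    convert NonUnitalSubring.closure_closure_coe_preimage (s := {a}) using 2
    ext
    simp [Subtype.ext_iff]
  have : IsMulCommutative (NonUnitalSubring.closure ({a} : Set R)) :=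
    NonUnitalSubring.isMulCommutative_closure (by simp)
  open scoped IsMulCommutative in
  rw [isJacobsonRadicalRing_iff_isNilElem_of_closure_eq_top hgen, ← NonUnitalSubring.isNilElem_coe]
end
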